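/- Let p ∈ [0, 1/2] and D ∈ [0, 1/2], and consider the backward test-channel joint distribution of (X, X_1, X_{12}) on {0,1}³ where X_{12} is uniform, X_1 is obtained from X_{12} by a BSC(p), and X from X_{12} by a BSC(D), with X − X_{12} − X_1 a Markov chain. For any finite random variable X_2 jointly distributed with (X, X_1, X_{12}) such that X_1 ⟂ X_2, X_{12} is a deterministic function of (X_1, X_2), and X − X_{12} − (X_1, X_2) is a Markov chain, and any function g_1 into {0,1}: E[d(X, g_1(X_2))] ≥ 1/2 − (1 − 2D)·p, with the bound attained for some such X_2 and g_1. -/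
import Mathlib


open scoped BigOperators

namespace MDC

structure FinProb (Ω : Type*) [Fintype Ω] where
  μ : Ω → ℝ
  nonneg : ∀ ω, 0 ≤ μ ω
  sum_one : ∑ ω, μ ω = 1

variable {Ω : Type*} [Fintype Ω]

/-- Probability that the random variable `f` takes the value `a`. -/
noncomputable def pr (P : FinProb Ω) {A : Type*} [DecidableEq A] (f : Ω → A) (a : A) : ℝ :=
  ∑ ω, if f ω = a then P.μ ω else 0

/-- Shannon entropy (base 2) of a finite random variable. -/
noncomputable def H (P : FinProb Ω) {A : Type*} [Fintype A] [DecidableEq A] (f : Ω → A) : ℝ :=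
  - ∑ a, pr P f a * Real.logb 2 (pr P f a)

/-- Conditional entropy H(f|g). -/
noncomputable def Hcond (P : FinProb Ω) {A B : Type*} [Fintype A] [DecidableEq A]
    [Fintype B] [DecidableEq B] (f : Ω → A) (g : Ω → B) : ℝ :=
  H P (fun ω => (f ω, g ω)) - H P g

/-- Mutual information I(f;g). -/
noncomputable def MI (P : FinProb Ω) {A B : Type*} [Fintype A] [DecidableEq A]
    [Fintype B] [DecidableEq B] (f : Ω → A) (g : Ω → B) : ℝ :=
  H P f + H P g - H P (fun ω => (f ω, g ω))

/-- Conditional mutual information I(f;g|h). -/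
noncomputable def CMI (P : FinProb Ω) {A B C : Type*} [Fintype A] [DecidableEq A]
    [Fintype B] [DecidableEq B] [Fintype C] [DecidableEq C]
    (f : Ω → A) (g : Ω → B) (h : Ω → C) : ℝ :=
  H P (fun ω => (f ω, h ω)) + H P (fun ω => (g ω, h ω))
    - H P (fun ω => (f ω, g ω, h ω)) - H P h

/-- Independence of two finite random variables. -/
def Indep (P : FinProb Ω) {A B : Type*} [DecidableEq A] [DecidableEq B]
    (f : Ω → A) (g : Ω → B) : Prop :=
  ∀ a b, pr P (fun ω => (f ω, g ω)) (a, b) = pr P f a * pr P g b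

/-- Conditional independence of `f` and `g` given `h` (a Markov chain f − h − g). -/
def CondIndep (P : FinProb Ω) {A B C : Type*} [DecidableEq A] [DecidableEq B] [DecidableEq C]
    (f : Ω → A) (g : Ω → B) (h : Ω → C) : Prop :=
  ∀ a b c, pr P h c * pr P (fun ω => (f ω, g ω, h ω)) (a, b, c) =
    pr P (fun ω => (f ω, h ω)) (a, c) * pr P (fun ω => (g ω, h ω)) (b, c)

/-- Binary entropy function. -/
noncomputable def Hb (p : ℝ) : ℝ := -(p * Real.logb 2 p) - (1 - p) * Real.logb 2 (1 - p)

/-- Expected Hamming distortion between two random variables. -/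
noncomputable def Edist (P : FinProb Ω) {A : Type*} [DecidableEq A] (f g : Ω → A) : ℝ :=
  ∑ ω, P.μ ω * (if f ω = g ω then 0 else 1)

end MDC

open MDC

open MDC

set_option linter.unusedSectionVars false
namespace MDCAux

variable {Ω : Type*} [Fintype Ω] {A B C : Type*}
  [Fintype A] [DecidableEq A] [Fintype B] [DecidableEq B] [Fintype C] [DecidableEq C]

lemma pr_nonneg (P : FinProb Ω) (f : Ω → A) (a : A) : 0 ≤ pr P f a := by
  unfold pr
  apply Finset.sum_nonneg
  intro ω _
  split
  · exact P.nonneg ω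
  · exact le_rfl

lemma pr_total (P : FinProb Ω) (f : Ω → A) : ∑ a, pr P f a = 1 := by
  unfold pr
  rw [Finset.sum_comm]
  simp only [Finset.sum_ite_eq, Finset.mem_univ, if_true]
  exact P.sum_one

lemma pr_sum_fst (P : FinProb Ω) (f : Ω → A) (g : Ω → B) (b : B) :
    ∑ a, pr P (fun ω => (f ω, g ω)) (a, b) = pr P g b := by
  unfold pr
  rw [Finset.sum_comm]
  refine Finset.sum_congr rfl fun ω _ => ?_
  by_cases h : g ω = b <;> simp [Prod.ext_iff, h]

lemma pr_sum_snd (P : FinProb Ω) (f : Ω → A) (g : Ω → B) (a : A) :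
    ∑ b, pr P (fun ω => (f ω, g ω)) (a, b) = pr P f a := by
  unfold pr
  rw [Finset.sum_comm]
  refine Finset.sum_congr rfl fun ω _ => ?_
  by_cases h : f ω = a <;> simp [Prod.ext_iff, h]

lemma pr_sum_mid (P : FinProb Ω) (f : Ω → A) (g : Ω → B) (h : Ω → C) (a : A) (c : C) :
    ∑ b, pr P (fun ω => (f ω, g ω, h ω)) (a, b, c) = pr P (fun ω => (f ω, h ω)) (a, c) := by
  unfold pr
  rw [Finset.sum_comm]
  refine Finset.sum_congr rfl fun ω _ => ?_
  by_cases h1 : f ω = a <;> by_cases h2 : h ω = c <;> simp [Prod.ext_iff, h1, h2]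

lemma pr_fun_mid (P : FinProb Ω) (f : Ω → A) (g : Ω → B) (h : Ω → C)
    (k : A → B → C) (hk : ∀ ω, h ω = k (f ω) (g ω)) (a : A) (b : B) (c : C) :
    pr P (fun ω => (f ω, g ω, h ω)) (a, b, c)
      = if c = k a b then pr P (fun ω => (f ω, g ω)) (a, b) else 0 := by
  unfold pr
  split
  · rename_i hc
    refine Finset.sum_congr rfl fun ω _ => ?_
    by_cases h1 : f ω = a <;> by_cases h2 : g ω = b <;>
      simp [Prod.ext_iff, h1, h2, hk ω, hc]
  · rename_i hc
    refine Finset.sum_eq_zero fun ω _ => ?_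
    rw [if_neg]
    simp only [Prod.mk.injEq, not_and]
    intro h1 h2 h3
    exact hc (by rw [← h3, hk ω, h1, h2])

lemma pr_fun_snd (P : FinProb Ω) (f : Ω → A) (g : Ω → B)
    (k : A → B) (hk : ∀ ω, g ω = k (f ω)) (a : A) (b : B) :
    pr P (fun ω => (f ω, g ω)) (a, b) = if b = k a then pr P f a else 0 := by
  unfold pr
  split
  · rename_i hc
    refine Finset.sum_congr rfl fun ω _ => ?_
    by_cases h1 : f ω = a <;> simp [Prod.ext_iff, h1, hk ω, hc]
  · rename_i hc
    refine Finset.sum_eq_zero fun ω _ => ?_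
    rw [if_neg]
    simp only [Prod.mk.injEq, not_and]
    intro h1 h2
    exact hc (by rw [← h2, hk ω, h1])

lemma Edist_eq (P : FinProb Ω) (f : Ω → A) (g : Ω → B) (g1 : B → A) :
    Edist P f (fun ω => g1 (g ω))
      = ∑ b, ∑ x, (if x = g1 b then 0 else 1) * pr P (fun ω => (f ω, g ω)) (x, b) := by
  unfold Edist pr
  have key : ∀ ω, P.μ ω * (if f ω = g1 (g ω) then (0:ℝ) else 1)
      = ∑ b, ∑ x, (if x = g1 b then (0:ℝ) else 1) * (if (f ω, g ω) = (x, b) then P.μ ω else 0) := by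
    intro ω
    rw [Finset.sum_eq_single (g ω)]
    · rw [Finset.sum_eq_single (f ω)]
      · simp [mul_comm]
      · intro x _ hx; simp [Prod.ext_iff, Ne.symm hx]
      · simp
    · intro b _ hb
      refine Finset.sum_eq_zero fun x _ => ?_
      simp [Prod.ext_iff, Ne.symm hb]
    · simp
  simp only [key]
  rw [Finset.sum_comm]
  refine Finset.sum_congr rfl fun b _ => ?_
  rw [Finset.sum_comm]
  refine Finset.sum_congr rfl fun x _ => ?_
  rw [Finset.mul_sum]

end MDCAux

open MDCAux in
private lemma lowerB (p D : ℝ) (hp0 : 0 ≤ p) (hp : p ≤ 1/2) (hD0 : 0 ≤ D) (hD : D ≤ 1/2)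
    (n m : ℕ) (P : FinProb (Fin n)) (X X1 X12 : Fin n → Fin 2)
    (X2 : Fin n → Fin m) (φ : Fin 2 → Fin m → Fin 2) (g1 : Fin m → Fin 2)
    (hJ : ∀ x x1 x12 : Fin 2, pr P (fun ω => (X ω, X1 ω, X12 ω)) (x, x1, x12)
        = (1/2) * (if x1 = x12 then 1 - p else p) * (if x = x12 then 1 - D else D))
    (hInd : Indep P X1 X2)
    (hφ : ∀ ω, X12 ω = φ (X1 ω) (X2 ω))
    (hCI : CondIndep P X (fun ω => (X1 ω, X2 ω)) X12) :
    1/2 - (1 - 2*D) * p ≤ Edist P X (fun ω => g1 (X2 ω)) := by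
  classical
  have h2v : ∀ v : Fin 2, v = 0 ∨ v = 1 := by decide
  have hX1X12 : ∀ a c : Fin 2, pr P (fun ω => (X1 ω, X12 ω)) (a, c)
      = 1/2 * (if a = c then 1 - p else p) := by
    intro a c
    rw [← pr_sum_fst P X (fun ω => (X1 ω, X12 ω)) (a, c)]
    simp only [hJ, Fin.sum_univ_two]
    fin_cases a <;> fin_cases c <;> norm_num <;> ring
  have hXX12 : ∀ x c : Fin 2, pr P (fun ω => (X ω, X12 ω)) (x, c)
      = 1/2 * (if x = c then 1 - D else D) := by
    intro x c
    rw [← pr_sum_mid P X X1 X12 x c]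
    simp only [hJ, Fin.sum_univ_two]
    fin_cases x <;> fin_cases c <;> norm_num <;> ring
  have hX12 : ∀ c : Fin 2, pr P X12 c = 1/2 := by
    intro c
    rw [← pr_sum_fst P X1 X12 c]
    simp only [hX1X12, Fin.sum_univ_two]
    fin_cases c <;> norm_num <;> ring
  have hX1 : ∀ a : Fin 2, pr P X1 a = 1/2 := by
    intro a
    rw [← pr_sum_snd P X1 X12 a]
    simp only [hX1X12, Fin.sum_univ_two]
    fin_cases a <;> norm_num <;> ring
  have hfact : ∀ (x a : Fin 2) (b : Fin m),
      pr P (fun ω => (X ω, X1 ω, X2 ω)) (x, a, b)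
        = (if x = φ a b then 1 - D else D) * (1/2 * pr P X2 b) := by
    intro x a b
    have hci := hCI x (a, b) (φ a b)
    rw [pr_fun_mid P X (fun ω => (X1 ω, X2 ω)) X12 (fun _ v => φ v.1 v.2)
        (fun ω => hφ ω) x (a, b) (φ a b)] at hci
    rw [pr_fun_snd P (fun ω => (X1 ω, X2 ω)) X12 (fun v => φ v.1 v.2)
        (fun ω => hφ ω) (a, b) (φ a b)] at hci
    simp only [eq_self_iff_true, if_true, hX12, hXX12, hInd a b, hX1] at hci
    linear_combination 2 * hci
  have hXX2 : ∀ (x : Fin 2) (b : Fin m), pr P (fun ω => (X ω, X2 ω)) (x, b)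
      = ((if x = φ 0 b then 1 - D else D) + (if x = φ 1 b then 1 - D else D)) * (1/2 * pr P X2 b) := by
    intro x b
    rw [← pr_sum_mid P X X1 X2 x b]
    simp only [hfact, Fin.sum_univ_two]
    ring
  have hcon : ∀ (a c : Fin 2), ∑ b, (if c = φ a b then 1/2 * pr P X2 b else 0)
      = 1/2 * (if a = c then 1 - p else p) := by
    intro a c
    rw [← hX1X12 a c, ← pr_sum_mid P X1 X2 X12 a c]
    refine Finset.sum_congr rfl fun b _ => ?_
    rw [pr_fun_mid P X1 X2 X12 φ hφ a b c, hInd a b, hX1 a]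
  have hA : ∑ b, (if φ 0 b = φ 1 b then (1:ℝ) else 0) * pr P X2 b ≤ 2 * p := by
    have h1 := hcon 0 1
    have h2 := hcon 1 0
    have key : ∀ b, (if φ 0 b = φ 1 b then (1:ℝ) else 0) * pr P X2 b
        ≤ 2 * (if (1:Fin 2) = φ 0 b then 1/2 * pr P X2 b else 0)
          + 2 * (if (0:Fin 2) = φ 1 b then 1/2 * pr P X2 b else 0) := by
      intro b
      have hqb : 0 ≤ pr P X2 b := pr_nonneg P X2 b
      rcases h2v (φ 0 b) with h0 | h0 <;> rcases h2v (φ 1 b) with hone | hone <;>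
        simp [h0, hone] <;> linarith
    calc ∑ b, (if φ 0 b = φ 1 b then (1:ℝ) else 0) * pr P X2 b
        ≤ ∑ b, (2 * (if (1:Fin 2) = φ 0 b then 1/2 * pr P X2 b else 0)
          + 2 * (if (0:Fin 2) = φ 1 b then 1/2 * pr P X2 b else 0)) :=
          Finset.sum_le_sum fun b _ => key b
      _ = 2 * (1/2 * p) + 2 * (1/2 * p) := by
          rw [Finset.sum_add_distrib, ← Finset.mul_sum, ← Finset.mul_sum, h1, h2]
          norm_num
      _ ≤ 2 * p := by linarith
  have hq1 : ∑ b, pr P X2 b = 1 := pr_total P X2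
  rw [Edist_eq P X X2 g1]
  have hTb : ∀ b : Fin m,
      (D + (1 - 2*D) * (1/2) * (1 - (if φ 0 b = φ 1 b then (1:ℝ) else 0))) * pr P X2 b
      ≤ ∑ x, (if x = g1 b then (0:ℝ) else 1) * pr P (fun ω => (X ω, X2 ω)) (x, b) := by
    intro b
    have hqb : 0 ≤ pr P X2 b := pr_nonneg P X2 b
    simp only [hXX2, Fin.sum_univ_two]
    rcases h2v (φ 0 b) with h0 | h0 <;> rcases h2v (φ 1 b) with hone | hone <;>
      rcases h2v (g1 b) with hg | hg <;>
      simp [h0, hone, hg] <;> nlinarith [hqb, hD, hD0]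
  have hsum : ∑ b, (D + (1 - 2*D) * (1/2) * (1 - (if φ 0 b = φ 1 b then (1:ℝ) else 0))) * pr P X2 b
      ≤ ∑ b, ∑ x, (if x = g1 b then (0:ℝ) else 1) * pr P (fun ω => (X ω, X2 ω)) (x, b) :=
    Finset.sum_le_sum fun b _ => hTb b
  have expand : ∑ b, (D + (1 - 2*D) * (1/2) * (1 - (if φ 0 b = φ 1 b then (1:ℝ) else 0))) * pr P X2 b
      = (D + (1 - 2*D) / 2) * (∑ b, pr P X2 b)
        - (1 - 2*D) / 2 * (∑ b, (if φ 0 b = φ 1 b then (1:ℝ) else 0) * pr P X2 b) := by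
    rw [Finset.mul_sum, Finset.mul_sum, ← Finset.sum_sub_distrib]
    exact Finset.sum_congr rfl fun b _ => by ring
  have h2D : (0:ℝ) ≤ (1 - 2*D) / 2 := by linarith
  have hfin := mul_le_mul_of_nonneg_left hA h2D
  rw [expand, hq1] at hsum
  linarith

set_option maxHeartbeats 1000000 in
private lemma exB (p D : ℝ) (hp0 : 0 ≤ p) (hp : p ≤ 1/2) (hD0 : 0 ≤ D) (hD : D ≤ 1/2) :
    (∃ (n m : ℕ) (P : FinProb (Fin n)) (X X1 X12 : Fin n → Fin 2)
        (X2 : Fin n → Fin m) (φ : Fin 2 → Fin m → Fin 2) (g1 : Fin m → Fin 2),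
      (∀ x x1 x12 : Fin 2, pr P (fun ω => (X ω, X1 ω, X12 ω)) (x, x1, x12)
        = (1/2) * (if x1 = x12 then 1 - p else p) * (if x = x12 then 1 - D else D)) ∧
      Indep P X1 X2 ∧
      (∀ ω, X12 ω = φ (X1 ω) (X2 ω)) ∧
      CondIndep P X (fun ω => (X1 ω, X2 ω)) X12 ∧
      Edist P X (fun ω => g1 (X2 ω)) = 1/2 - (1 - 2*D) * p) := by
  refine ⟨12, 3, ⟨![(1-2*p)/2*(1-D), (1-2*p)/2*D, (1-2*p)/2*(1-D), (1-2*p)/2*D,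
      p/2*(1-D), p/2*D, p/2*(1-D), p/2*D, p/2*(1-D), p/2*D, p/2*(1-D), p/2*D], ?_, ?_⟩,
    ![0,1,1,0, 0,1,1,0, 0,1,1,0],
    ![0,0,1,1, 0,0,0,0, 1,1,1,1],
    ![0,0,1,1, 0,0,1,1, 0,0,1,1],
    ![2,2,2,2, 0,0,1,1, 0,0,1,1],
    (fun x1 x2 => if x2 = 2 then x1 else if x2 = 1 then 1 else 0),
    ![0,1,0], ?_, ?_, ?_, ?_, ?_⟩
  · have h1 : (0:ℝ) ≤ (1-2*p)/2*(1-D) := by nlinarith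
    have h2 : (0:ℝ) ≤ (1-2*p)/2*D := by nlinarith
    have h3 : (0:ℝ) ≤ p/2*(1-D) := by nlinarith
    have h4 : (0:ℝ) ≤ p/2*D := by nlinarith
    intro ω
    fin_cases ω <;> first | exact h1 | exact h2 | exact h3 | exact h4
  · simp [Fin.sum_univ_succ, Matrix.cons_val_succ]
    ring
  · intro x x1 x12
    fin_cases x <;> fin_cases x1 <;> fin_cases x12 <;>
      · simp [pr, Fin.sum_univ_succ, Matrix.cons_val_succ]
        try ring_nf
        try tauto
  · intro a b
    fin_cases a <;> fin_cases b <;>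
      · simp [pr, Fin.sum_univ_succ, Matrix.cons_val_succ]
        try ring_nf
        try tauto
  · intro ω
    fin_cases ω <;> rfl
  · intro a b c
    fin_cases a <;> fin_cases b <;> fin_cases c <;>
      · simp [pr, Fin.sum_univ_succ, Matrix.cons_val_succ]
        try ring_nf
        try tauto
  · simp [Edist, Fin.sum_univ_succ, Matrix.cons_val_succ]
    ring


/-- Core optimization of Theorem 5: for the backward BSC test channel, any second
description independent of the first, determining X₁₂ and respecting the Markov
chain, has side distortion at least 1/2 − (1 − 2D)p, and this is attained. -/
theorem stmt19 (p D : ℝ) (hp0 : 0 ≤ p) (hp : p ≤ 1/2) (hD0 : 0 ≤ D) (hD : D ≤ 1/2) :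
    (∀ (n m : ℕ) (P : FinProb (Fin n)) (X X1 X12 : Fin n → Fin 2)
        (X2 : Fin n → Fin m) (φ : Fin 2 → Fin m → Fin 2) (g1 : Fin m → Fin 2),
      (∀ x x1 x12 : Fin 2, pr P (fun ω => (X ω, X1 ω, X12 ω)) (x, x1, x12)
        = (1/2) * (if x1 = x12 then 1 - p else p) * (if x = x12 then 1 - D else D)) →
      Indep P X1 X2 →
      (∀ ω, X12 ω = φ (X1 ω) (X2 ω)) →
      CondIndep P X (fun ω => (X1 ω, X2 ω)) X12 →
      1/2 - (1 - 2*D) * p ≤ Edist P X (fun ω => g1 (X2 ω))) ∧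
    (∃ (n m : ℕ) (P : FinProb (Fin n)) (X X1 X12 : Fin n → Fin 2)
        (X2 : Fin n → Fin m) (φ : Fin 2 → Fin m → Fin 2) (g1 : Fin m → Fin 2),
      (∀ x x1 x12 : Fin 2, pr P (fun ω => (X ω, X1 ω, X12 ω)) (x, x1, x12)
        = (1/2) * (if x1 = x12 then 1 - p else p) * (if x = x12 then 1 - D else D)) ∧
      Indep P X1 X2 ∧
      (∀ ω, X12 ω = φ (X1 ω) (X2 ω)) ∧
      CondIndep P X (fun ω => (X1 ω, X2 ω)) X12 ∧
      Edist P X (fun ω => g1 (X2 ω)) = 1/2 - (1 - 2*D) * p) := by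
  exact ⟨fun n m P X X1 X12 X2 φ g1 hJ hI hφ hCI =>
    lowerB p D hp0 hp hD0 hD n m P X X1 X12 X2 φ g1 hJ hI hφ hCI,
    exB p D hp0 hp hD0 hD⟩
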